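/- arXiv:2505.24326 — 7 statements merged into one kernel-verified Lean document; each statement's English description precedes it below -/
import Mathlib

section
/- Let A be an N×N unitary complex matrix, and let K, L be subsets of {0,...,N-1} with |K| = |L|. Then the submatrix A[K,L] (rows indexed by K, columns by L) is invertible if and only if the complementary submatrix A[Kᶜ, Lᶜ] is invertible. -/
/-!
If `A[Kᶜ, Lᶜ]` is singular, a nonzero kernel vector extended by zero gives `w ≠ 0` vanishing on
`L` with `A w` vanishing on `Kᶜ`. Then `u = A w` is nonzero and supported on `K`, and
`Aᴴ u = w` vanishes on `L`, so `u` restricted to `K` is a kernel vector of `A[K, L]ᴴ`.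
Exchanging the roles of the blocks and their complements gives the converse.
-/

open Matrix Function

variable {R m n ι κ : Type*} [CommRing R]

theorem Matrix.submatrix_mulVec_of_injective [Fintype n] [Fintype ι] (B : Matrix m n R)
    (eR : ι → m) {eC : ι → n} (he : Injective eC) (v : ι → R) :
    B.submatrix eR eC *ᵥ v = (B *ᵥ extend eC v 0) ∘ eR := by
  ext i
  refine Fintype.sum_of_injective eC he _ _ (fun j hj => ?_) (fun t => ?_)
  · rw [extend_apply' _ _ _ hj, Pi.zero_apply, mul_zero]
  · rw [he.extend_apply]; rfl

theorem Matrix.det_submatrix_eq_zero_iff_exists_mulVec [IsDomain R] [Fintype n] [Fintype ι]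
    [DecidableEq ι] (B : Matrix m n R) (eR : ι → m) {eC : ι → n} (he : Injective eC) :
    (B.submatrix eR eC).det = 0 ↔
      ∃ w : n → R, w ≠ 0 ∧ (∀ j ∉ Set.range eC, w j = 0) ∧ ∀ i, (B *ᵥ w) (eR i) = 0 := by
  rw [← exists_mulVec_eq_zero_iff]
  constructor
  · rintro ⟨v, hv, hBv⟩
    refine ⟨extend eC v 0, fun h => hv ?_, fun j hj => extend_apply' _ _ _ hj, fun i => ?_⟩
    · ext t; simpa [he.extend_apply] using congrFun h (eC t)
    · exact congrFun ((B.submatrix_mulVec_of_injective eR he v).symm.trans hBv) i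
  · rintro ⟨w, hw, hsupp, hBw⟩
    have hext : extend eC (w ∘ eC) 0 = w := by
      ext j
      by_cases hj : j ∈ Set.range eC
      · obtain ⟨t, rfl⟩ := hj; exact he.extend_apply _ _ _
      · rw [extend_apply' _ _ _ hj, hsupp j hj, Pi.zero_apply]
    refine ⟨w ∘ eC, fun h => hw ?_, ?_⟩
    · rw [← hext, h]; exact extend_const eC 0
    · rw [B.submatrix_mulVec_of_injective eR he, hext]; exact funext hBw

theorem Matrix.det_submatrix_eq_zero_of_det_submatrix_compl_eq_zero [IsDomain R] [StarRing R]
    [Fintype n] [DecidableEq n] [Fintype ι] [DecidableEq ι] [Fintype κ] [DecidableEq κ]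
    {A : Matrix n n R} (hA : A ∈ unitaryGroup n R) {eK : ι → n} (eL : ι → n) (eKc : κ → n)
    {eLc : κ → n} (hK : Injective eK) (hLc : Injective eLc)
    (hKc : (Set.range eK)ᶜ ⊆ Set.range eKc) (hL : Set.range eLc ⊆ (Set.range eL)ᶜ)
    (h : (A.submatrix eKc eLc).det = 0) : (A.submatrix eK eL).det = 0 := by
  obtain ⟨w, hw, hw_supp, hAw⟩ := (A.det_submatrix_eq_zero_iff_exists_mulVec eKc hLc).1 h
  have hAhAw : Aᴴ *ᵥ (A *ᵥ w) = w := by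
    rw [mulVec_mulVec, ← star_eq_conjTranspose, (mem_unitaryGroup_iff').1 hA, one_mulVec]
  rw [← star_eq_zero, ← det_conjTranspose, conjTranspose_submatrix]
  refine (Aᴴ.det_submatrix_eq_zero_iff_exists_mulVec eL hK).2
    ⟨A *ᵥ w, ?_, fun j hj => ?_, fun i => ?_⟩
  · rintro h0; rw [h0, mulVec_zero] at hAhAw; exact hw hAhAw.symm
  · obtain ⟨t, rfl⟩ := hKc hj; exact hAw t
  · rw [hAhAw]; exact hw_supp _ fun hi => hL hi (Set.mem_range_self i)

theorem Matrix.det_submatrix_eq_zero_iff_det_submatrix_compl_eq_zero [IsDomain R] [StarRing R]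
    [Fintype n] [DecidableEq n] [Fintype ι] [DecidableEq ι] [Fintype κ] [DecidableEq κ]
    {A : Matrix n n R} (hA : A ∈ unitaryGroup n R) {eK eL : ι → n} {eKc eLc : κ → n}
    (hK : Injective eK) (hL : Injective eL) (hKc : Injective eKc) (hLc : Injective eLc)
    (hK_compl : Set.range eKc = (Set.range eK)ᶜ) (hL_compl : Set.range eLc = (Set.range eL)ᶜ) :
    (A.submatrix eK eL).det = 0 ↔ (A.submatrix eKc eLc).det = 0 :=
  ⟨det_submatrix_eq_zero_of_det_submatrix_compl_eq_zero hA _ _ hKc hL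
    (eq_compl_comm.1 hK_compl).ge (eq_compl_comm.1 hL_compl).le,
  det_submatrix_eq_zero_of_det_submatrix_compl_eq_zero hA _ _ hK hLc hK_compl.ge hL_compl.le⟩

theorem stmt_0 (N r : ℕ) (A : Matrix (Fin N) (Fin N) ℂ)
    (hA : A ∈ Matrix.unitaryGroup (Fin N) ℂ)
    (K L : Finset (Fin N)) (hK : K.card = r) (hL : L.card = r) :
    IsUnit (A.submatrix (K.orderEmbOfFin hK) (L.orderEmbOfFin hL)).det ↔
      IsUnit (A.submatrix
        (Kᶜ.orderEmbOfFin (by simp [Finset.card_compl, hK]) : Fin (N - r) → Fin N)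
        (Lᶜ.orderEmbOfFin (by simp [Finset.card_compl, hL]) : Fin (N - r) → Fin N)).det := by
  simp only [isUnit_iff_ne_zero, ne_eq]
  rw [det_submatrix_eq_zero_iff_det_submatrix_compl_eq_zero hA (K.orderEmbOfFin hK).injective
    (L.orderEmbOfFin hL).injective (Kᶜ.orderEmbOfFin _).injective (Lᶜ.orderEmbOfFin _).injective]
  all_goals simp only [Finset.range_orderEmbOfFin, Finset.coe_compl]
end

section
/- Jacobi's identity for minors: if A is an invertible N×N complex matrix and K, L ⊆ {0,...,N-1} with |K| = |L|, then det A[K,L] = (-1)^(Σ_{k∈K} k + Σ_{ℓ∈L} ℓ) · det A · det((A⁻¹)[Lᶜ, Kᶜ]). -/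
/-!
Reindex the rows of `A` by `K ⊕ Kᶜ` and its columns by `L ⊕ Lᶜ` (each part listed in increasing
order), giving a block matrix `M` whose inverse `B` is `A⁻¹` reindexed the other way round.
Since `M * B = 1`, multiplying `M` by `[[1, B₁₂], [0, B₂₂]]` gives `[[M₁₁, 0], [M₂₁, 1]]`, so
`det M₁₁ = det M * det B₂₂`. The reindexing changes `det A` by the signs of two shuffle
permutations; the inversions of the shuffle of `K` are the pairs `(k, c) ∈ K × Kᶜ` with `c < k`,
and there are `∑ K - (0 + 1 + ⋯ + (#K - 1))` of them. The second term appears for `K` and `L`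
alike, so only the parity of `∑ K + ∑ L` survives.
-/

open Finset

namespace Finset

theorem exists_orderEmbOfFin_eq {α : Type*} [LinearOrder α] {s : Finset α} {k : ℕ}
    (h : #s = k) {a : α} (ha : a ∈ s) : ∃ i, s.orderEmbOfFin h i = a := by
  rwa [← Set.mem_range, range_orderEmbOfFin]

theorem sum_card_filter_lt {α : Type*} [LinearOrder α] (s : Finset α) :
    ∑ v ∈ s, #{u ∈ s | u < v} = ∑ i ∈ range #s, i := by
  induction s using Finset.induction_on_max with
  | empty => simp
  | insert a t hlt ih =>
    have ha : a ∉ t := fun h => lt_irrefl a (hlt a h)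
    have hfilter_a : {u ∈ insert a t | u < a} = t := by
      rw [filter_insert, if_neg (lt_irrefl a), filter_true_of_mem hlt]
    have hfilter_v : ∀ v ∈ t, #{u ∈ insert a t | u < v} = #{u ∈ t | u < v} := fun v hv => by
      rw [filter_insert, if_neg (hlt v hv).not_gt]
    rw [sum_insert ha, hfilter_a, sum_congr rfl hfilter_v, ih, card_insert_of_notMem ha,
      sum_range_succ, add_comm]

theorem card_filter_lt_add_card_compl_filter_lt {n : ℕ} (s : Finset (Fin n)) (v : Fin n) :
    #{u ∈ s | u < v} + #{u ∈ sᶜ | u < v} = v := by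
  rw [← Fin.card_Iio, ← card_filter_add_card_filter_not (s := Iio v) (p := (· ∈ s))]
  congr 2 <;> ext u <;> simp [and_comm]

theorem prod_neg_one_pow_card_compl_filter_lt {n : ℕ} (s : Finset (Fin n)) :
    ∏ v ∈ s, (-1 : ℤˣ) ^ #{u ∈ sᶜ | u < v} = (-1) ^ (∑ v ∈ s, (v : ℕ) + ∑ i ∈ range #s, i) := by
  have hpow : ∀ v : Fin n,
      (-1 : ℤˣ) ^ #{u ∈ sᶜ | u < v} = (-1) ^ ((v : ℕ) + #{u ∈ s | u < v}) := fun v => by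
    rw [← card_filter_lt_add_card_compl_filter_lt s v, add_right_comm, ← two_mul, pow_add,
      pow_mul, Int.units_sq, one_pow, one_mul]
  rw [prod_congr rfl fun v _ => hpow v, prod_pow_eq_pow_sum, sum_add_distrib, sum_card_filter_lt]

end Finset

namespace Equiv.Perm

theorem sign_eq_prod_of_strictMonoOn {n : ℕ} (τ : Perm (Fin n)) (s : Finset (Fin n))
    (hs : StrictMonoOn τ s) (hsc : StrictMonoOn τ ↑sᶜ) (hlt : ∀ a ∈ s, ∀ b ∉ s, τ a < τ b) :
    sign τ = ∏ v ∈ s, (-1) ^ #{u ∈ sᶜ | u < v} := by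
  rw [sign_eq_prod_prod_Iio, ← univ_inter s, ← prod_ite_mem]
  refine prod_congr rfl fun v _ => ?_
  split_ifs with hv
  · have hinv : ∀ u ∈ Iio v, (τ u < τ v ↔ u ∈ s) := fun u hu => by
      by_cases hu' : u ∈ s
      · simpa [hu'] using hs hu' hv (mem_Iio.mp hu)
      · simpa [hu'] using (hlt v hv u hu').le
    rw [prod_congr rfl fun u hu => if_congr (hinv u hu) rfl rfl, prod_ite, prod_const_one,
      one_mul, prod_const]
    congr 2
    ext u
    simp [and_comm]
  · refine prod_eq_one fun u hu => if_pos ?_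
    by_cases hu' : u ∈ s
    · exact hlt u hu' v hv
    · exact hsc (by simpa using hu') (by simpa using hv) (mem_Iio.mp hu)

theorem sign_finSumEquivOfFinset {N r m : ℕ} (h : r + m = N) (s : Finset (Fin N))
    (hs : #s = r) (hsc : #sᶜ = m) :
    sign ((finSumFinEquiv.trans (finCongr h)).symm.trans (finSumEquivOfFinset hs hsc)) =
      (-1) ^ (∑ v ∈ s, (v : ℕ) + ∑ i ∈ range r, i) := by
  set e := finSumFinEquiv.trans (finCongr h)
  set f := finSumEquivOfFinset hs hsc
  have hτ : ∀ x, (e.symm.trans f)⁻¹ (f x) = e x := fun x => by simp [Perm.inv_def]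
  have hinl : ∀ i, f (.inl i) = s.orderEmbOfFin hs i := finSumEquivOfFinset_inl hs hsc
  have hinr : ∀ j, f (.inr j) = sᶜ.orderEmbOfFin hsc j := finSumEquivOfFinset_inr hs hsc
  rw [← sign_inv, sign_eq_prod_of_strictMonoOn _ s, prod_neg_one_pow_card_compl_filter_lt, hs]
  · rintro a ha b hb hab
    obtain ⟨i, rfl⟩ := exists_orderEmbOfFin_eq hs ha
    obtain ⟨j, rfl⟩ := exists_orderEmbOfFin_eq hs hb
    rw [← hinl, ← hinl, hτ, hτ]
    have := (s.orderEmbOfFin hs).lt_iff_lt.mp hab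
    simpa [e] using Fin.strictMono_castAdd m this
  · rintro a ha b hb hab
    obtain ⟨i, rfl⟩ := exists_orderEmbOfFin_eq hsc ha
    obtain ⟨j, rfl⟩ := exists_orderEmbOfFin_eq hsc hb
    rw [← hinr, ← hinr, hτ, hτ]
    have := (sᶜ.orderEmbOfFin hsc).lt_iff_lt.mp hab
    simpa [e] using this
  · intro a ha b hb
    obtain ⟨i, rfl⟩ := exists_orderEmbOfFin_eq hs ha
    obtain ⟨j, rfl⟩ := exists_orderEmbOfFin_eq hsc (mem_compl.mpr hb)
    rw [← hinl, ← hinr, hτ, hτ]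
    simp only [e, trans_apply, finSumFinEquiv_apply_left, finSumFinEquiv_apply_right,
      finCongr_apply, Fin.lt_def, Fin.val_cast, Fin.val_castAdd, Fin.val_natAdd]
    omega

end Equiv.Perm

namespace Matrix

variable {R : Type*} [CommRing R]

theorem det_submatrix_finSumEquivOfFinset {N r m : ℕ} (A : Matrix (Fin N) (Fin N) R)
    {K L : Finset (Fin N)} (hK : #K = r) (hL : #L = r) (hKc : #Kᶜ = m) (hLc : #Lᶜ = m) :
    (A.submatrix (finSumEquivOfFinset hK hKc) (finSumEquivOfFinset hL hLc)).det =
      (-1) ^ (∑ k ∈ K, (k : ℕ) + ∑ l ∈ L, (l : ℕ)) * A.det := by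
  have h : r + m = N := by rw [← hK, ← hKc, card_add_card_compl, Fintype.card_fin]
  set e := finSumFinEquiv.trans (finCongr h)
  set σK := e.symm.trans (finSumEquivOfFinset hK hKc)
  set σL := e.symm.trans (finSumEquivOfFinset hL hLc)
  have hsub : A.submatrix (finSumEquivOfFinset hK hKc) (finSumEquivOfFinset hL hLc) =
      ((A.submatrix σK id).submatrix id σL).submatrix e e := by
    ext i j; simp [σK, σL]
  rw [hsub, det_submatrix_equiv_self, det_permute', det_permute,
    Equiv.Perm.sign_finSumEquivOfFinset, Equiv.Perm.sign_finSumEquivOfFinset, ← mul_assoc]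
  congr 1
  push_cast
  rw [← pow_add, add_add_add_comm, ← two_mul, pow_add, pow_mul, neg_one_sq, one_pow, mul_one,
    add_comm]

theorem det_toBlocks₁₁_of_mul_eq_one {m n : Type*} [Fintype m] [Fintype n] [DecidableEq m]
    [DecidableEq n] {M B : Matrix (m ⊕ n) (m ⊕ n) R} (h : M * B = 1) :
    M.toBlocks₁₁.det = M.det * B.toBlocks₂₂.det := by
  have hblocks := h
  rw [← fromBlocks_toBlocks M, ← fromBlocks_toBlocks B, fromBlocks_multiply, ← fromBlocks_one,
    fromBlocks_inj] at hblocks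
  obtain ⟨-, h₁₂, -, h₂₂⟩ := hblocks
  have key : M * fromBlocks 1 B.toBlocks₁₂ 0 B.toBlocks₂₂ =
      fromBlocks M.toBlocks₁₁ 0 M.toBlocks₂₁ 1 := by
    conv_lhs => rw [← fromBlocks_toBlocks M]
    rw [fromBlocks_multiply, h₁₂, h₂₂]
    simp
  simpa [det_fromBlocks_zero₂₁, det_fromBlocks_zero₁₂] using (congrArg det key).symm

end Matrix

theorem stmt_1 (N r : ℕ) (A : Matrix (Fin N) (Fin N) ℂ) (hA : IsUnit A.det)
    (K L : Finset (Fin N)) (hK : K.card = r) (hL : L.card = r) :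
    (A.submatrix (K.orderEmbOfFin hK) (L.orderEmbOfFin hL)).det =
      (-1 : ℂ) ^ (∑ k ∈ K, (k : ℕ) + ∑ l ∈ L, (l : ℕ)) * A.det *
      ((A⁻¹).submatrix
        (Lᶜ.orderEmbOfFin (by simp [Finset.card_compl, hL]) : Fin (N - r) → Fin N)
        (Kᶜ.orderEmbOfFin (by simp [Finset.card_compl, hK]) : Fin (N - r) → Fin N)).det := by
  have hKc : #Kᶜ = N - r := by simp [card_compl, hK]
  have hLc : #Lᶜ = N - r := by simp [card_compl, hL]
  have hinv : A.submatrix (finSumEquivOfFinset hK hKc) (finSumEquivOfFinset hL hLc) *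
      A⁻¹.submatrix (finSumEquivOfFinset hL hLc) (finSumEquivOfFinset hK hKc) = 1 := by
    rw [Matrix.submatrix_mul_equiv, Matrix.mul_nonsing_inv _ hA, Matrix.submatrix_one_equiv]
  have hjacobi := Matrix.det_toBlocks₁₁_of_mul_eq_one hinv
  rwa [Matrix.det_submatrix_finSumEquivOfFinset] at hjacobi
end

section
/- Let p and q be distinct primes and let f(X) ∈ ℤ[X] have nonnegative integer coefficients with q > f(1). If the reduction of f modulo q is divisible by 1 + X + X² + ⋯ + X^{p-1} in ℤ/qℤ[X], then f(X) is divisible by 1 + X + X² + ⋯ + X^{p-1} in ℤ[X]. -/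
/-!
Reducing exponents modulo `p` turns `f` into a polynomial `f*` of degree `< p` with
`1 + X + ⋯ + X^(p-1) ∣ f - f*`, since that polynomial divides `X^p - 1`. A polynomial of degree
`< p` is divisible by `1 + X + ⋯ + X^(p-1)` exactly when its first `p` coefficients agree, so the
hypothesis says that the coefficients of `f*` agree modulo `q`. They are sums of coefficients of
`f`, hence lie in `[0, f(1)] ⊆ [0, q)`, so they agree in `ℤ` and `1 + X + ⋯ + X^(p-1)` divides
`f*`, hence `f`.
-/

open Polynomial

namespace Polynomial

variable {R : Type*}

section Semiring

variable [Semiring R]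

lemma coeff_geom_sum_X (n j : ℕ) :
    (∑ i ∈ Finset.range n, (X : R[X]) ^ i).coeff j = if j < n then 1 else 0 := by
  simp [finsetSum_coeff, coeff_X_pow, Finset.sum_ite_eq]

lemma geom_sum_X_dvd_iff_coeff_eq {n : ℕ} {g : R[X]} (hdeg : g.natDegree < n) :
    (∑ i ∈ Finset.range n, (X : R[X]) ^ i) ∣ g ↔ ∀ j < n, g.coeff j = g.coeff 0 := by
  nontriviality R
  have hn : n ≠ 0 := by omega
  constructor
  · intro hdvd j hj
    have hle : g.natDegree ≤ (∑ i ∈ Finset.range n, (X : R[X]) ^ i).natDegree :=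
      calc g.natDegree ≤ n - 1 := by omega
        _ ≤ _ := le_natDegree_of_ne_zero (by simp [hn])
    rw [eq_mul_leadingCoeff_of_monic_of_dvd_of_natDegree_le (monic_geom_sum_X hn) hdvd hle]
    simp [coeff_mul_C, hj, hn]
  · intro hcoeff
    refine ⟨C (g.coeff 0), ext fun j => ?_⟩
    rw [coeff_mul_C, coeff_geom_sum_X]
    split_ifs with hj
    · rw [one_mul, hcoeff j hj]
    · rw [zero_mul]
      exact coeff_eq_zero_of_natDegree_lt (by omega)

/-- The remainder of `f` modulo `X ^ n - 1` (for `n ≠ 0`). -/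
noncomputable def foldExponents (n : ℕ) (f : R[X]) : R[X] :=
  ∑ i ∈ f.support, monomial (i % n) (f.coeff i)

lemma coeff_foldExponents (n : ℕ) (f : R[X]) (j : ℕ) :
    (foldExponents n f).coeff j = ∑ i ∈ f.support with i % n = j, f.coeff i := by
  simp [foldExponents, finsetSum_coeff, coeff_monomial, Finset.sum_filter]

lemma natDegree_foldExponents_lt {n : ℕ} (hn : n ≠ 0) (f : R[X]) :
    (foldExponents n f).natDegree < n := by
  have : (foldExponents n f).natDegree ≤ n - 1 :=
    natDegree_sum_le_of_forall_le _ _ fun i _ =>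
      (natDegree_monomial_le _).trans (by have := Nat.mod_lt i (Nat.pos_of_ne_zero hn); omega)
  omega

end Semiring

lemma geom_sum_X_dvd_sub_foldExponents [CommRing R] (n : ℕ) (f : R[X]) :
    (∑ i ∈ Finset.range n, (X : R[X]) ^ i) ∣ f - foldExponents n f := by
  have hdvd_pow (k : ℕ) : (∑ i ∈ Finset.range n, (X : R[X]) ^ i) ∣ (X ^ n) ^ k - 1 :=
    (Dvd.intro _ (geom_sum_mul X n)).trans (by simpa using sub_dvd_pow_sub_pow ((X : R[X]) ^ n) 1 k)
  nth_rw 1 [f.as_sum_support]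
  rw [foldExponents, ← Finset.sum_sub_distrib]
  refine Finset.dvd_sum fun i _ => ?_
  have : monomial i (f.coeff i) - monomial (i % n) (f.coeff i) =
      monomial (i % n) (f.coeff i) * ((X ^ n) ^ (i / n) - 1) := by
    rw [mul_sub, mul_one, ← pow_mul, monomial_mul_X_pow, Nat.mod_add_div]
  rw [this]
  exact (hdvd_pow _).mul_left _

section Ordered

variable [CommSemiring R] [PartialOrder R] [IsOrderedAddMonoid R]

lemma coeff_foldExponents_nonneg {f : R[X]} (hf : ∀ i, 0 ≤ f.coeff i) (n j : ℕ) :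
    0 ≤ (foldExponents n f).coeff j := by
  rw [coeff_foldExponents]
  exact Finset.sum_nonneg fun i _ => hf i

lemma coeff_foldExponents_le_eval_one {f : R[X]} (hf : ∀ i, 0 ≤ f.coeff i) (n j : ℕ) :
    (foldExponents n f).coeff j ≤ f.eval 1 := by
  rw [coeff_foldExponents, eval_eq_sum, sum_def]
  simp only [one_pow, mul_one]
  exact Finset.sum_le_sum_of_subset_of_nonneg (Finset.filter_subset _ _) fun i _ _ => hf i

end Ordered

end Polynomial

theorem stmt_2_general (p q : ℕ) (hp : p.Prime)
    (f : Polynomial ℤ) (hf : ∀ i, 0 ≤ f.coeff i) (hq1 : f.eval 1 < (q : ℤ))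
    (hdvd : (∑ i ∈ Finset.range p, (X : Polynomial (ZMod q)) ^ i) ∣
      f.map (Int.castRingHom (ZMod q))) :
    (∑ i ∈ Finset.range p, (X : Polynomial ℤ) ^ i) ∣ f := by
  set g := foldExponents p f
  have hdeg : g.natDegree < p := natDegree_foldExponents_lt hp.ne_zero f
  have hsub := geom_sum_X_dvd_sub_foldExponents p f
  have hdvd_map : (∑ i ∈ Finset.range p, (X : Polynomial (ZMod q)) ^ i) ∣
      g.map (Int.castRingHom (ZMod q)) := by
    have := map_dvd (Int.castRingHom (ZMod q)) hsub
    rw [Polynomial.map_sub, Polynomial.map_sum] at this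
    simp only [Polynomial.map_pow, map_X] at this
    exact (dvd_sub_right hdvd).1 this
  have hcoeff_mod := (geom_sum_X_dvd_iff_coeff_eq (natDegree_map_le.trans_lt hdeg)).1 hdvd_map
  have hbound (j : ℕ) : g.coeff j % q = g.coeff j :=
    Int.emod_eq_of_lt (coeff_foldExponents_nonneg hf p j)
      ((coeff_foldExponents_le_eval_one hf p j).trans_lt hq1)
  rw [← sub_add_cancel f g]
  refine dvd_add hsub ((geom_sum_X_dvd_iff_coeff_eq hdeg).2 fun j hj => ?_)
  have := hcoeff_mod j hj
  rw [coeff_map, coeff_map, eq_intCast, eq_intCast, ZMod.intCast_eq_intCast_iff'] at this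
  rwa [hbound, hbound] at this

theorem stmt_2 (p q : ℕ) (hp : p.Prime) (hq : q.Prime) (hpq : p ≠ q)
    (f : Polynomial ℤ) (hf : ∀ i, 0 ≤ f.coeff i) (hq1 : f.eval 1 < (q : ℤ))
    (hdvd : (∑ i ∈ Finset.range p, (X : Polynomial (ZMod q)) ^ i) ∣
      f.map (Int.castRingHom (ZMod q))) :
    (∑ i ∈ Finset.range p, (X : Polynomial ℤ) ^ i) ∣ f :=
  stmt_2_general p q hp f hf hq1 hdvd
end

section
/- Chebotarev's theorem: if p is a prime and ω = e^{-2πi/p}, then for any subsets A, B ⊆ ℤ/pℤ with |A| = |B|, the determinant of the matrix (ω^{ab})_{a∈A, b∈B} is nonzero. -/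
/-!
Frenkel's proof. With `α i = (a i).val` and `β j = (b j).val` the determinant is `P(ω)`, where
`P = det (X ^ (α i * β j)) ∈ ℤ[X]`. Expand each `(X + 1) ^ (α i * β j)` binomially and
`det (X + 1) ^ (α i * β j)` by multilinearity in the columns. As a function of `α i`,
`m! * choose (α i * β j) m` is a polynomial of degree `m`, so a column of degree `m j` only
contributes through injective exponent vectors `k ≤ m`. This forces `∑ m ≥ N = 0 + ⋯ + (r - 1)`,
and if `∑ m = N` it forces `k = m` to be a permutation of `0, …, r - 1`. Hence `P(X + 1)` has no
terms below `X ^ N`, and `∏ j!` times its coefficient of `X ^ N` is the product of the Vandermonde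
determinants of `α` and `β`. So `P = (X - 1) ^ N * U` where `U(1)` is that coefficient. If
`P(ω) = 0` then `U(ω) = 0`, so `Φ_p ∣ U` and `p = Φ_p(1)` divides `U(1)`, hence divides the
Vandermonde product. But the `α i` are pairwise distinct mod `p`, and so are the `β j`.
-/

open Finset Polynomial Matrix Function

namespace Finset

theorem sum_range_card_le_sum (S : Finset ℕ) : ∑ i ∈ range #S, i ≤ ∑ i ∈ S, i := by
  induction S using Finset.induction_on_max with
  | empty => simp
  | insert a s ha ih =>
    have hsa : #s ≤ a := by simpa using card_le_card fun x hx => mem_range.2 (ha x hx)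
    rw [card_insert_of_notMem fun h => (ha a h).false, sum_range_succ,
      sum_insert fun h => (ha a h).false]
    omega

theorem eq_range_card_of_sum_le {S : Finset ℕ} (h : ∑ i ∈ S, i ≤ ∑ i ∈ range #S, i) :
    S = range #S := by
  induction S using Finset.induction_on_max with
  | empty => simp
  | insert a s ha ih =>
    have has : a ∉ s := fun h => (ha a h).false
    have hsa : #s ≤ a := by simpa using card_le_card fun x hx => mem_range.2 (ha x hx)
    rw [card_insert_of_notMem has, sum_range_succ, sum_insert has] at h
    have hs := sum_range_card_le_sum s
    rw [card_insert_of_notMem has, range_add_one, ← ih (by omega), show a = #s by omega]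

end Finset

theorem Fin.sum_val_le_sum_of_injective {r : ℕ} {k : Fin r → ℕ} (hk : Injective k) :
    ∑ j : Fin r, (j : ℕ) ≤ ∑ j, k j := by
  have h := sum_range_card_le_sum (univ.image k)
  rwa [card_image_of_injective _ hk, card_univ, Fintype.card_fin, sum_image hk.injOn,
    ← Fin.sum_univ_eq_sum_range (fun i => i)] at h

theorem Fin.eq_of_injective_of_le_of_sum_le {r : ℕ} {k m : Fin r → ℕ} (hk : Injective k)
    (hkm : ∀ j, k j ≤ m j) (hm : ∑ j, m j ≤ ∑ j : Fin r, (j : ℕ)) : k = m := by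
  have hsum : ∑ j, k j = ∑ j, m j :=
    le_antisymm (sum_le_sum fun j _ => hkm j) (hm.trans (sum_val_le_sum_of_injective hk))
  funext j
  exact (sum_eq_sum_iff_of_le fun j _ => hkm j).1 hsum j (mem_univ j)

theorem Fin.exists_perm_of_injective_of_sum_le {r : ℕ} {k : Fin r → ℕ} (hk : Injective k)
    (h : ∑ j, k j ≤ ∑ j : Fin r, (j : ℕ)) : ∃ σ : Equiv.Perm (Fin r), ∀ j, k j = σ j := by
  have himage : univ.image k = range r := by
    have h' := eq_range_card_of_sum_le (S := univ.image k)
    rw [card_image_of_injective _ hk, card_univ, Fintype.card_fin, sum_image hk.injOn,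
      ← Fin.sum_univ_eq_sum_range (fun i => i)] at h'
    exact h' h
  have hlt (j : Fin r) : k j < r := mem_range.1 (himage ▸ mem_image_of_mem k (mem_univ j))
  have hinj : Injective fun j => (⟨k j, hlt j⟩ : Fin r) := fun i j hij => hk (by simpa using hij)
  exact ⟨Equiv.ofBijective _ (Finite.injective_iff_bijective.1 hinj), fun j => rfl⟩

namespace Matrix

variable {R : Type*} [CommRing R] {n : Type*} [Fintype n] [DecidableEq n]

theorem det_of_sum_eq_sum_piFinset {ι : n → Type*} (s : ∀ j, Finset (ι j))
    (g : ∀ j, ι j → n → R) :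
    det (of fun i j => ∑ k ∈ s j, g j k i) =
      ∑ k ∈ Fintype.piFinset s, det (of fun i j => g j (k j) i) := by
  rw [← det_transpose]
  simp_rw [← det_transpose (of fun i j => g j _ i)]
  convert detRowAlternating.toMultilinearMap.map_sum_finset g s using 2
  · exact congrArg detRowAlternating (funext₂ fun i j => by simp)
  · rfl

theorem det_of_pow_eq_zero_of_not_injective (α : n → R) {k : n → ℕ} (hk : ¬Injective k) :
    det (of fun i j => α i ^ k j) = 0 := by
  obtain ⟨j₁, j₂, hk, hne⟩ : ∃ j₁ j₂, k j₁ = k j₂ ∧ j₁ ≠ j₂ := by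
    simpa [Injective] using hk
  exact det_zero_of_column_eq hne fun i => by simp [hk]

theorem det_of_eval_eq_sum (α : n → R) (p : n → R[X]) (d : n → ℕ)
    (hd : ∀ j, (p j).natDegree ≤ d j) :
    det (of fun i j => (p j).eval (α i)) = ∑ k ∈ Fintype.piFinset fun j => range (d j + 1),
      (∏ j, (p j).coeff (k j)) * det (of fun i j => α i ^ k j) := by
  have hp (i j) : (p j).eval (α i) = ∑ k ∈ range (d j + 1), (p j).coeff k * α i ^ k :=
    eval_eq_sum_range' (Nat.lt_succ_of_le (hd j)) _
  simp_rw [hp]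
  rw [det_of_sum_eq_sum_piFinset]
  exact sum_congr rfl fun k _ =>
    det_mul_row (fun j => (p j).coeff (k j)) (of fun i j => α i ^ k j)

theorem exists_injective_le_natDegree_of_det_ne_zero (α : n → R) (p : n → R[X])
    (h : det (of fun i j => (p j).eval (α i)) ≠ 0) :
    ∃ k : n → ℕ, Injective k ∧ ∀ j, k j ≤ (p j).natDegree := by
  by_contra hk
  refine h ((det_of_eval_eq_sum α p _ fun _ => le_rfl).trans (sum_eq_zero fun k hk' => ?_))
  have hle (j : n) : k j ≤ (p j).natDegree :=
    Nat.lt_succ_iff.1 (mem_range.1 (Fintype.mem_piFinset.1 hk' j))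
  rw [det_of_pow_eq_zero_of_not_injective α fun hinj => hk ⟨k, hinj, hle⟩, mul_zero]

theorem det_of_eval_eq_sign_mul {r : ℕ} (α : Fin r → R) (p : Fin r → R[X])
    (σ : Equiv.Perm (Fin r)) (hp : ∀ j, (p j).natDegree ≤ σ j) :
    det (of fun i j => (p j).eval (α i)) =
      Equiv.Perm.sign σ * (∏ j, (p j).coeff (σ j)) * (vandermonde α).det := by
  rw [det_of_eval_eq_sum α p _ hp, sum_eq_single fun j => (σ j : ℕ)]
  · have hperm : (of fun i j => α i ^ (σ j : ℕ)) = (vandermonde α).submatrix id σ := rfl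
    rw [hperm, det_permute']
    ring
  · intro k hk hne
    by_cases hinj : Injective k
    · refine absurd (Fin.eq_of_injective_of_le_of_sum_le hinj (fun j => ?_) ?_) hne
      · exact Nat.lt_succ_iff.1 (mem_range.1 (Fintype.mem_piFinset.1 hk j))
      · exact (Equiv.sum_comp σ fun j => (j : ℕ)).le
    · rw [det_of_pow_eq_zero_of_not_injective α hinj, mul_zero]
  · exact fun h => absurd (Fintype.mem_piFinset.2 fun j => self_mem_range_succ _) h

end Matrix

section Binomial

variable {r : ℕ} (α β : Fin r → ℕ)

theorem factorial_prod_mul_det_choose (m : Fin r → ℕ) :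
    (∏ j, ((m j).factorial : ℤ)) * det (of fun i j => ((α i * β j).choose (m j) : ℤ)) =
      det (of fun i j => ((descPochhammer ℤ (m j)).comp (C (β j : ℤ) * X)).eval (α i : ℤ)) := by
  rw [← det_mul_row]
  congr 1
  ext i j
  simp only [of_apply, eval_comp, eval_mul, eval_C, eval_X]
  rw [mul_comm (β j : ℤ), ← Nat.cast_mul (α i), descPochhammer_eval_eq_descFactorial,
    Nat.descFactorial_eq_factorial_mul_choose]
  push_cast
  rfl

theorem natDegree_descPochhammer_comp_C_mul_X_le (b : ℤ) (m : ℕ) :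
    ((descPochhammer ℤ m).comp (C b * X)).natDegree ≤ m := by
  refine natDegree_comp_le.trans ?_
  rw [descPochhammer_natDegree]
  exact (Nat.mul_le_mul_left m ((natDegree_C_mul_le b X).trans natDegree_X_le)).trans_eq
    (mul_one m)

theorem exists_injective_le_of_det_choose_ne_zero {m : Fin r → ℕ}
    (h : det (of fun i j => ((α i * β j).choose (m j) : ℤ)) ≠ 0) :
    ∃ k : Fin r → ℕ, Injective k ∧ ∀ j, k j ≤ m j := by
  have hfac : (∏ j, ((m j).factorial : ℤ)) ≠ 0 :=
    prod_ne_zero_iff.2 fun j _ => Nat.cast_ne_zero.2 (m j).factorial_ne_zero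
  have h' := mul_ne_zero hfac h
  rw [factorial_prod_mul_det_choose] at h'
  obtain ⟨k, hk, hle⟩ := exists_injective_le_natDegree_of_det_ne_zero _ _ h'
  exact ⟨k, hk, fun j => (hle j).trans (natDegree_descPochhammer_comp_C_mul_X_le _ _)⟩

theorem factorial_prod_mul_det_choose_perm (σ : Equiv.Perm (Fin r)) :
    (∏ j : Fin r, ((j : ℕ).factorial : ℤ)) *
        det (of fun i j => ((α i * β j).choose (σ j) : ℤ)) =
      Equiv.Perm.sign σ * (∏ j, (β j : ℤ) ^ (σ j : ℕ)) *
        (vandermonde fun i => (α i : ℤ)).det := by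
  rw [← Equiv.prod_comp σ, factorial_prod_mul_det_choose,
    det_of_eval_eq_sign_mul _ _ σ fun j => natDegree_descPochhammer_comp_C_mul_X_le _ _]
  congr 3 with j
  have hlead : (descPochhammer ℤ (σ j : ℕ)).coeff (σ j) = 1 := by
    simpa [descPochhammer_natDegree] using (monic_descPochhammer ℤ (σ j : ℕ)).coeff_natDegree
  rw [comp_C_mul_X_coeff, hlead, one_mul]

end Binomial

section ShiftedPowerDet

variable {r : ℕ} (α β : Fin r → ℕ)

theorem coeff_det_X_add_one_pow {D : ℕ} (hD : ∀ i j, α i * β j < D) (M : ℕ) :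
    (det (of fun i j => (X + 1 : ℤ[X]) ^ (α i * β j))).coeff M =
      ∑ m ∈ (Fintype.piFinset fun _ => range D) with ∑ j, m j = M,
        det (of fun i j => ((α i * β j).choose (m j) : ℤ)) := by
  have hexpand (i j : Fin r) : (X + 1 : ℤ[X]) ^ (α i * β j) =
      ∑ m ∈ range D, C (((α i * β j).choose m : ℕ) : ℤ) * X ^ m := by
    have hdeg : ((X + 1 : ℤ[X]) ^ (α i * β j)).natDegree < D := by
      rw [← C_1, natDegree_pow_X_add_C]
      exact hD i j
    conv_lhs => rw [as_sum_range' _ D hdeg]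
    simp_rw [coeff_X_add_one_pow, C_mul_X_pow_eq_monomial]
  have hterm (m : Fin r → ℕ) :
      det (of fun i j => C (((α i * β j).choose (m j) : ℕ) : ℤ) * X ^ (m j)) =
        C (det (of fun i j => ((α i * β j).choose (m j) : ℤ))) * X ^ ∑ j, m j := by
    rw [RingHom.map_det, ← prod_pow_eq_pow_sum, mul_comm, ← det_mul_row]
    congr 1
    ext i j
    simp [mul_comm]
  simp_rw [hexpand, det_of_sum_eq_sum_piFinset, hterm, finsetSum_coeff, coeff_C_mul_X_pow,
    sum_filter]
  exact sum_congr rfl fun m _ => by simp [eq_comm]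

theorem exists_le_and_forall_mul_lt : ∃ D, r ≤ D ∧ ∀ i j, α i * β j < D :=
  ⟨r + ∑ x : Fin r × Fin r, α x.1 * β x.2 + 1, by omega, fun i j => by
    have hij := single_le_sum (f := fun x : Fin r × Fin r => α x.1 * β x.2)
      (fun _ _ => Nat.zero_le _) (mem_univ (i, j))
    dsimp only at hij
    omega⟩

theorem coeff_det_X_add_one_pow_eq_zero {M : ℕ} (hM : M < ∑ j : Fin r, (j : ℕ)) :
    (det (of fun i j => (X + 1 : ℤ[X]) ^ (α i * β j))).coeff M = 0 := by
  obtain ⟨D, -, hD⟩ := exists_le_and_forall_mul_lt α β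
  rw [coeff_det_X_add_one_pow α β hD]
  refine sum_eq_zero fun m hm => ?_
  by_contra h
  obtain ⟨k, hk, hkm⟩ := exists_injective_le_of_det_choose_ne_zero α β h
  have hk_sum := Fin.sum_val_le_sum_of_injective hk
  have hkm_sum := sum_le_sum fun j (_ : j ∈ univ) => hkm j
  have hm_sum := (mem_filter.1 hm).2
  omega

theorem factorial_prod_mul_coeff_det_X_add_one_pow :
    (∏ j : Fin r, ((j : ℕ).factorial : ℤ)) *
        (det (of fun i j => (X + 1 : ℤ[X]) ^ (α i * β j))).coeff (∑ j : Fin r, (j : ℕ)) =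
      (vandermonde fun i => (α i : ℤ)).det * (vandermonde fun j => (β j : ℤ)).det := by
  obtain ⟨D, hrD, hD⟩ := exists_le_and_forall_mul_lt α β
  rw [coeff_det_X_add_one_pow α β hD, mul_sum]
  calc _ = ∑ σ : Equiv.Perm (Fin r), (∏ j : Fin r, ((j : ℕ).factorial : ℤ)) *
          det (of fun i j => ((α i * β j).choose (σ j) : ℤ)) := by
        symm
        refine sum_bij_ne_zero (fun σ _ _ j => (σ j : ℕ)) (fun σ _ _ => ?_)
          (fun σ _ _ τ _ _ h => Equiv.ext fun j => Fin.ext (congrFun h j)) (fun m hm hne => ?_)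
          (fun _ _ _ => rfl)
        · exact mem_filter.2 ⟨Fintype.mem_piFinset.2 fun j =>
            mem_range.2 ((σ j).2.trans_le hrD), Equiv.sum_comp σ fun j => (j : ℕ)⟩
        · obtain ⟨-, hsum⟩ := mem_filter.1 hm
          obtain ⟨k, hk, hkm⟩ :=
            exists_injective_le_of_det_choose_ne_zero α β (right_ne_zero_of_mul hne)
          obtain rfl := Fin.eq_of_injective_of_le_of_sum_le hk hkm hsum.le
          obtain ⟨σ, hσ⟩ := Fin.exists_perm_of_injective_of_sum_le hk hsum.le
          obtain rfl : k = fun j => (σ j : ℕ) := funext hσ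
          exact ⟨σ, mem_univ σ, hne, rfl⟩
    _ = ∑ σ : Equiv.Perm (Fin r), Equiv.Perm.sign σ * (∏ j, (β j : ℤ) ^ (σ j : ℕ)) *
          (vandermonde fun i => (α i : ℤ)).det :=
        sum_congr rfl fun σ _ => factorial_prod_mul_det_choose_perm α β σ
    _ = _ := by
        rw [← sum_mul, mul_comm, ← det_transpose (vandermonde fun j => (β j : ℤ)),
          det_apply _ᵀ]
        simp [Units.smul_def]

end ShiftedPowerDet

theorem exists_eq_X_sub_one_pow_mul {R : Type*} [CommRing R] (P : R[X]) {N : ℕ}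
    (h : ∀ M < N, (P.comp (X + 1)).coeff M = 0) :
    ∃ U, P = (X - 1) ^ N * U ∧ U.eval 1 = (P.comp (X + 1)).coeff N := by
  obtain ⟨V, hV⟩ : X ^ N ∣ P.comp (X + 1) := X_pow_dvd_iff.2 h
  refine ⟨V.comp (X - 1), ?_, ?_⟩
  · have hP : P = (P.comp (X + 1)).comp (X - 1) := by
      rw [Polynomial.comp_assoc, add_comp, X_comp, one_comp, sub_add_cancel, comp_X]
    rw [hP, hV, mul_comp, X_pow_comp]
  · rw [hV, coeff_X_pow_mul', if_pos le_rfl, Nat.sub_self, eval_comp, coeff_zero_eq_eval_zero]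
    simp

theorem IsPrimitiveRoot.prime_dvd_eval_one {K : Type*} [Field K] [CharZero K] {p : ℕ}
    (hp : p.Prime) {ω : K} (hω : IsPrimitiveRoot ω p) {U : ℤ[X]} (hU : aeval ω U = 0) :
    (p : ℤ) ∣ U.eval 1 := by
  have : Fact p.Prime := ⟨hp⟩
  obtain ⟨W, rfl⟩ : cyclotomic p ℤ ∣ U := by
    rw [cyclotomic_eq_minpoly hω hp.pos]
    exact minpoly.isIntegrallyClosed_dvd (hω.isIntegral hp.pos) hU
  rw [eval_mul, eval_one_cyclotomic_prime]
  exact dvd_mul_right _ _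

theorem comp_X_add_one_det_X_pow {r : ℕ} (α β : Fin r → ℕ) :
    (det (of fun i j => (X : ℤ[X]) ^ (α i * β j))).comp (X + 1) =
      det (of fun i j => (X + 1 : ℤ[X]) ^ (α i * β j)) := by
  rw [← coe_compRingHom_apply, RingHom.map_det]
  congr 1
  ext i j
  simp

theorem prime_dvd_det_vandermonde_mul_of_aeval_det_X_pow_eq_zero {K : Type*} [Field K]
    [CharZero K] {p : ℕ} (hp : p.Prime) {ω : K} (hω : IsPrimitiveRoot ω p) {r : ℕ}
    (α β : Fin r → ℕ) (h : aeval ω (det (of fun i j => (X : ℤ[X]) ^ (α i * β j))) = 0) :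
    (p : ℤ) ∣ (vandermonde fun i => (α i : ℤ)).det * (vandermonde fun j => (β j : ℤ)).det := by
  obtain ⟨U, hPU, hU⟩ := exists_eq_X_sub_one_pow_mul _ fun M hM => by
    rw [comp_X_add_one_det_X_pow]
    exact coeff_det_X_add_one_pow_eq_zero α β hM
  have hUω : aeval ω U = 0 := by
    rw [hPU, map_mul, map_pow, map_sub, aeval_X, map_one] at h
    exact (mul_eq_zero.1 h).resolve_left (pow_ne_zero _ (sub_ne_zero.2 (hω.ne_one hp.one_lt)))
  rw [← factorial_prod_mul_coeff_det_X_add_one_pow, ← comp_X_add_one_det_X_pow, ← hU]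
  exact dvd_mul_of_dvd_right (hω.prime_dvd_eval_one hp hUω) _

theorem aeval_det_X_pow_val_mul_val {A : Type*} [CommRing A] {ω : A} {p : ℕ} (hω : ω ^ p = 1)
    {r : ℕ} (a b : Fin r → ZMod p) :
    aeval ω (det (of fun i j => (X : ℤ[X]) ^ ((a i).val * (b j).val))) =
      det (of fun i j => ω ^ (a i * b j).val) := by
  rw [AlgHom.map_det]
  congr 1
  ext i j
  have hmod (n : ℕ) : ω ^ (n % p) = ω ^ n := by
    conv_rhs => rw [← Nat.mod_add_div n p, pow_add, pow_mul, hω, one_pow, mul_one]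
  rw [AlgHom.mapMatrix_apply, map_apply, of_apply, of_apply, map_pow, aeval_X, ZMod.val_mul,
    hmod]

theorem ZMod.intCast_det_vandermonde_val {p r : ℕ} [NeZero p] (a : Fin r → ZMod p) :
    ((vandermonde fun i => ((a i).val : ℤ)).det : ZMod p) = (vandermonde a).det := by
  simp [det_vandermonde]

theorem stmt_6 (p : ℕ) (hp : p.Prime) (r : ℕ) (a b : Fin r → ZMod p)
    (ha : Function.Injective a) (hb : Function.Injective b) :
    Matrix.det (Matrix.of fun i j : Fin r =>
      Complex.exp (-2 * Real.pi * Complex.I / p) ^ (a i * b j).val) ≠ 0 := by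
  have : Fact p.Prime := ⟨hp⟩
  have hω : IsPrimitiveRoot (Complex.exp (-2 * Real.pi * Complex.I / p)) p := by
    rw [show -2 * Real.pi * Complex.I / p = -(2 * Real.pi * Complex.I / p) by ring,
      Complex.exp_neg]
    exact (Complex.isPrimitiveRoot_exp p hp.ne_zero).inv
  intro h
  have hdvd := prime_dvd_det_vandermonde_mul_of_aeval_det_X_pow_eq_zero hp hω
    (fun i => (a i).val) (fun j => (b j).val)
    ((aeval_det_X_pow_val_mul_val hω.pow_eq_one a b).trans h)
  rw [← ZMod.intCast_zmod_eq_zero_iff_dvd, Int.cast_mul, ZMod.intCast_det_vandermonde_val,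
    ZMod.intCast_det_vandermonde_val] at hdvd
  exact mul_ne_zero (det_vandermonde_ne_zero_iff.2 ha) (det_vandermonde_ne_zero_iff.2 hb) hdvd
end

section
/- Let n be a square-free positive integer, p a prime dividing n, and ω a primitive n-th root of unity. Then Φ_n(ω^p) = p·u for some unit u in the ring ℤ[ω^p]. -/
/-!
Write `n = p * m` with `p ∤ m` and let `ζ = ω ^ p`, a primitive `m`-th root of unity. Modulo `p`,
`Φ_{mp} ≡ Φ_m ^ (p - 1)`, and `Φ_m(ζ) = 0`, so `Φ_{mp}(ζ) = p * g(ζ)` with `g ∈ ℤ[X]`. On the other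
hand `Φ_{mp}` divides `1 + X^m + ⋯ + X^{m(p-1)}`, which takes the value `p` at `ζ`; hence
`p * g(ζ) * T(ζ) = p` for some `T ∈ ℤ[X]`, and `g(ζ)` is a unit of `ℤ[ζ]`.
-/

open Polynomial

theorem Polynomial.C_dvd_cyclotomic_mul_prime_sub_pow {m p : ℕ} (hp : p.Prime) (hpm : ¬p ∣ m) :
    C (p : ℤ) ∣ cyclotomic (m * p) ℤ - cyclotomic m ℤ ^ (p - 1) := by
  have : Fact p.Prime := ⟨hp⟩
  rw [← Ideal.mem_span_singleton, ← Set.image_singleton, ← Ideal.map_span,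
    ← ZMod.ker_intCastRingHom, ← ker_mapRingHom, RingHom.mem_ker, map_sub, map_pow,
    coe_mapRingHom, map_cyclotomic_int, map_cyclotomic_int,
    cyclotomic_mul_prime_eq_pow_of_not_dvd _ hpm, sub_self]

theorem Polynomial.cyclotomic_mul_dvd_geom_sum {R : Type*} [CommRing R] [IsDomain R] {m k : ℕ}
    (hm : 0 < m) (hk : 1 < k) : cyclotomic (m * k) R ∣ ∑ i ∈ Finset.range k, (X ^ m) ^ i := by
  have hmem : m ∈ (m * k).properDivisors :=
    Nat.mem_properDivisors.2 ⟨dvd_mul_right m k, lt_mul_of_one_lt_right hm hk⟩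
  rw [← mul_dvd_mul_iff_left (X_pow_sub_C_ne_zero hm (1 : R)), map_one, mul_geom_sum, ← pow_mul]
  exact X_pow_sub_one_mul_cyclotomic_dvd_X_pow_sub_one_of_dvd R hmem

theorem IsPrimitiveRoot.exists_unit_aeval_cyclotomic_mul_prime {A : Type*} [CommRing A]
    [IsDomain A] [CharZero A] {ζ : A} {m p : ℕ} (hζ : IsPrimitiveRoot ζ m) (hp : p.Prime)
    (hpm : ¬p ∣ m) : ∃ u : Aˣ, aeval ζ (cyclotomic (m * p) ℤ) = p * u := by
  have hm : 0 < m := Nat.pos_of_ne_zero (by rintro rfl; exact hpm (dvd_zero p))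
  obtain ⟨g, hg⟩ := C_dvd_cyclotomic_mul_prime_sub_pow hp hpm
  obtain ⟨T, hT⟩ := cyclotomic_mul_dvd_geom_sum (R := ℤ) hm hp.one_lt
  have hroot : aeval ζ (cyclotomic m ℤ) = 0 := by
    rw [aeval_def, eval₂_eq_eval_map, map_cyclotomic]
    exact hζ.isRoot_cyclotomic hm
  have hcong : aeval ζ (cyclotomic (m * p) ℤ) = p * aeval ζ g := by
    have h := congrArg (aeval ζ) hg
    rwa [map_sub, map_pow, hroot, zero_pow (Nat.sub_ne_zero_of_lt hp.one_lt), sub_zero, map_mul,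
      aeval_C, algebraMap_int_eq, eq_intCast, Int.cast_natCast] at h
  have hgeom : aeval ζ (cyclotomic (m * p) ℤ) * aeval ζ T = p := by
    have h := congrArg (aeval ζ) hT
    simpa [hζ.pow_eq_one] using h.symm
  have hinv : aeval ζ g * aeval ζ T = 1 :=
    mul_left_cancel₀ (Nat.cast_ne_zero.2 hp.ne_zero) (by rw [mul_one, ← mul_assoc, ← hcong, hgeom])
  exact ⟨Units.mkOfMulEqOne _ _ hinv, hcong⟩

theorem stmt_10 (n : ℕ) (hn : Squarefree n) (p : ℕ) (hp : p.Prime) (hpn : p ∣ n)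
    (ω : ℂ) (hω : IsPrimitiveRoot ω n) :
    ∃ u : (Algebra.adjoin ℤ ({ω ^ p} : Set ℂ))ˣ,
      (Polynomial.cyclotomic n ℂ).eval (ω ^ p) = (p : ℂ) * ((u : Algebra.adjoin ℤ ({ω ^ p} : Set ℂ)) : ℂ) := by
  obtain ⟨m, rfl⟩ := hpn
  have hpm : ¬p ∣ m := hp.coprime_iff_not_dvd.1 (Nat.squarefree_mul_iff.1 hn).1
  have hζ : IsPrimitiveRoot (ω ^ p) m := hω.pow (Nat.pos_of_ne_zero hn.ne_zero) rfl
  let z : Algebra.adjoin ℤ ({ω ^ p} : Set ℂ) := ⟨ω ^ p, Algebra.self_mem_adjoin_singleton ℤ _⟩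
  obtain ⟨u, hu⟩ := (IsPrimitiveRoot.coe_submonoidClass_iff.1 hζ : IsPrimitiveRoot z m)
    |>.exists_unit_aeval_cyclotomic_mul_prime hp hpm
  refine ⟨u, ?_⟩
  rw [mul_comm p m, ← map_cyclotomic _ (algebraMap ℤ ℂ), eval_map_algebraMap]
  change aeval (z : ℂ) _ = _
  rw [← aeval_subalgebra_coe, hu, Subalgebra.coe_mul, SubringClass.coe_natCast]
end

section
/- Let q be a prime not dividing M, let ζ be a primitive M-th root of unity in an extension field of 𝔽_q, let A ⊆ ℤ/Mℤ be an arithmetic progression with common difference d and |A| = n, and let B = {b_1,...,b_n} ⊆ ℤ/Mℤ be such that d(b − b') ≢ 0 mod M for all distinct b, b' ∈ B. Then det(ζ^{ab})_{a∈A, b∈B} ≠ 0. -/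
/-!
The entry in row `a₀ + i d` and column `b_j` is `ζ^(a₀ b_j) · (ζ^(d b_j))^i`, so the matrix is
the transposed Vandermonde matrix of the nodes `ζ^(d b_j)` with its columns scaled by nonzero
factors. Since `ζ` has order exactly `M`, the nodes are distinct precisely when the `d b_j` are.
-/

theorem Matrix.det_of_mul_pow_ne_zero {R : Type*} [CommRing R] [IsDomain R] {n : ℕ}
    (c x : Fin n → R) (hc : ∀ j, c j ≠ 0) (hx : Function.Injective x) :
    (Matrix.of fun i j : Fin n => c j * x j ^ (i : ℕ)).det ≠ 0 := by
  have hscale : (Matrix.of fun i j : Fin n => c j * x j ^ (i : ℕ)) =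
      Matrix.of fun i j => c j * (Matrix.vandermonde x).transpose i j := rfl
  rw [hscale, Matrix.det_mul_row, Matrix.det_transpose]
  exact mul_ne_zero (Finset.prod_ne_zero_iff.mpr fun j _ => hc j)
    (Matrix.det_vandermonde_ne_zero_iff.mpr hx)

namespace IsPrimitiveRoot

variable {G : Type*} [CommMonoid G] {ζ : G} {M : ℕ}

theorem pow_val_eq_pow_iff [NeZero M] (hζ : IsPrimitiveRoot ζ M) {u : ZMod M} {k : ℕ} :
    ζ ^ u.val = ζ ^ k ↔ u = k := by
  rw [(hζ.isOfFinOrder (NeZero.ne M)).pow_eq_pow_iff_modEq, ← hζ.eq_orderOf,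
    ← ZMod.natCast_eq_natCast_iff, ZMod.natCast_zmod_val]

end IsPrimitiveRoot

theorem stmt_11_general (M : ℕ) (hM : 0 < M)
    (F : Type*) [Field F] (ζ : F) (hζ : IsPrimitiveRoot ζ M)
    (n : ℕ) (a₀ d : ZMod M) (b : Fin n → ZMod M)
    (hb : ∀ i j : Fin n, i ≠ j → d * (b i - b j) ≠ 0) :
    Matrix.det (Matrix.of fun i j : Fin n =>
      ζ ^ ((a₀ + (i : ℕ) * d) * b j).val) ≠ 0 := by
  have : NeZero M := ⟨hM.ne'⟩
  have hentry : ∀ i j : Fin n, ζ ^ ((a₀ + (i : ℕ) * d) * b j).val =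
      ζ ^ (a₀ * b j).val * (ζ ^ (d * b j).val) ^ (i : ℕ) := by
    intro i j
    rw [← pow_mul, ← pow_add, hζ.pow_val_eq_pow_iff]
    push_cast [ZMod.natCast_val, ZMod.cast_id]
    ring
  have hinj : Function.Injective fun j => ζ ^ (d * b j).val := by
    intro i j hij
    by_contra hne
    refine hb i j hne ?_
    rw [mul_sub, sub_eq_zero, ← ZMod.natCast_zmod_val (d * b j)]
    exact hζ.pow_val_eq_pow_iff.mp hij
  simp_rw [hentry]
  exact Matrix.det_of_mul_pow_ne_zero _ _ (fun j => pow_ne_zero _ (hζ.ne_zero hM.ne')) hinj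

theorem stmt_11 (M q : ℕ) (hq : q.Prime) (hqM : ¬ q ∣ M) (hM : 0 < M)
    (F : Type*) [Field F] (hF : CharP F q) (ζ : F) (hζ : IsPrimitiveRoot ζ M)
    (n : ℕ) (a₀ d : ZMod M) (b : Fin n → ZMod M)
    (hb : ∀ i j : Fin n, i ≠ j → d * (b i - b j) ≠ 0) :
    Matrix.det (Matrix.of fun i j : Fin n =>
      ζ ^ ((a₀ + (i : ℕ) * d) * b j).val) ≠ 0 :=
  stmt_11_general M hM F ζ hζ n a₀ d b hb
end

section
/- Let B be a square matrix with n×n block structure, where the (i,j) block is a_{ij}·B_{ij} with a_{ij} ∈ ℂ and B_{ij} ∈ ℂ^{M_i × M_j}, satisfying M_1 ≥ M_2 ≥ ⋯ ≥ M_n and such that B_{ij} equals the submatrix of B_{i1} formed by its first M_j columns. Then det B = ∏_{k=1}^n (det A_k)^{M_k − M_{k+1}} · ∏_{i=1}^n det B_{ii}, where M_{n+1} = 0 and A_k = (a_{ij})_{1≤i,j≤k}. -/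
/-!
Suppose first that the entries lie in a domain and all leading minors `det A_k` are nonzero.
Right-multiply `B` by the block upper triangular matrix `U` whose `(j, l)` block is `u_{jl} • 1`,
where `u_l` is the last column of `adj A_l`. Since `A_l u_l = det A_l • e_l` and the blocks are
nested, `B U` is block lower triangular with diagonal blocks `det A_l • B_{ll}`, while
`det U = ∏ (det A_{l-1})^{M_l}`. Cancelling `det U` and telescoping gives the formula. The general
case follows by applying this to the matrix of indeterminates `X_{ij}`, whose leading minors are
nonzero (they specialise to `1` at the identity), and then specialising `X` to `a`.
-/

open Matrix Finset

section SigmaBlocks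

variable {ι R : Type*} {κ : ι → Type*} [Fintype ι] [LinearOrder ι] [∀ i, Fintype (κ i)]
  [∀ i, DecidableEq (κ i)] [CommRing R]

theorem Matrix.BlockTriangular.det_sigma {X : Matrix (Σ i, κ i) (Σ i, κ i) R}
    (h : X.BlockTriangular Sigma.fst) :
    X.det = ∏ k, (X.submatrix (Sigma.mk k) (Sigma.mk k)).det := by
  rw [h.det_fintype]
  refine prod_congr rfl fun k _ => ?_
  rw [← det_submatrix_equiv_self (Equiv.sigmaSubtype k).symm]
  rfl

theorem Matrix.det_sigma_of_blockTriangular_transpose {X : Matrix (Σ i, κ i) (Σ i, κ i) R}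
    (h : Xᵀ.BlockTriangular Sigma.fst) :
    X.det = ∏ k, (X.submatrix (Sigma.mk k) (Sigma.mk k)).det := by
  rw [← det_transpose, h.det_sigma]
  simp only [← transpose_submatrix, det_transpose]

end SigmaBlocks

section NestedBlocks

variable {ι R : Type*} [Fintype ι] [LinearOrder ι] [CommRing R] {M : ι → ℕ} {D : ℕ}

def nestedBlockMatrix (hle : ∀ j, M j ≤ D) (a : Matrix ι ι R)
    (C : ∀ i, Matrix (Fin (M i)) (Fin D) R) : Matrix (Σ i, Fin (M i)) (Σ i, Fin (M i)) R :=
  of fun p q => a p.1 q.1 * C p.1 p.2 (Fin.castLE (hle q.1) q.2)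

variable (M) in
def scalarBlockMatrix (u : Matrix ι ι R) : Matrix (Σ i, Fin (M i)) (Σ i, Fin (M i)) R :=
  of fun p q => if (p.2 : ℕ) = q.2 then u p.1 q.1 else 0

theorem det_scalarBlockMatrix {u : Matrix ι ι R} (hu : u.BlockTriangular id) :
    (scalarBlockMatrix M u).det = ∏ i, u i i ^ M i := by
  have htri : (scalarBlockMatrix M u).BlockTriangular Sigma.fst := by
    intro p q hqp
    simp only [scalarBlockMatrix, of_apply, hu hqp, ite_self]
  rw [htri.det_sigma]
  refine prod_congr rfl fun i _ => ?_
  have hblock : (scalarBlockMatrix M u).submatrix (Sigma.mk i) (Sigma.mk i) = u i i • 1 := by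
    ext s t
    simp [scalarBlockMatrix, one_apply, Fin.val_eq_val]
  rw [hblock, det_smul, det_one, mul_one, Fintype.card_fin]

theorem nestedBlockMatrix_mul_scalarBlockMatrix_apply (hle : ∀ j, M j ≤ D) (hM : Antitone M)
    (a : Matrix ι ι R) (C : ∀ i, Matrix (Fin (M i)) (Fin D) R) {u : Matrix ι ι R}
    (hu : u.BlockTriangular id) (i l : ι) (s : Fin (M i)) (t : Fin (M l)) :
    (nestedBlockMatrix hle a C * scalarBlockMatrix M u) ⟨i, s⟩ ⟨l, t⟩
      = (a * u) i l * C i s (Fin.castLE (hle l) t) := by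
  rw [mul_apply, mul_apply, sum_mul, Fintype.sum_sigma]
  refine sum_congr rfl fun j _ => ?_
  simp only [nestedBlockMatrix, scalarBlockMatrix, of_apply, mul_ite, mul_zero]
  by_cases ht : (t : ℕ) < M j
  · rw [Fintype.sum_eq_single ⟨t, ht⟩ fun r hr => if_neg fun h => hr (Fin.ext h), if_pos rfl]
    rw [show Fin.castLE (hle j) ⟨t, ht⟩ = Fin.castLE (hle l) t from rfl]
    ring
  · have hlj : l < j := lt_of_not_ge fun hjl => ht (t.isLt.trans_le (hM hjl))
    rw [hu hlj, mul_zero, zero_mul]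
    exact sum_eq_zero fun r _ => if_neg (by omega)

end NestedBlocks

namespace Matrix

variable {R : Type*} [CommRing R] {n : ℕ}

def leadingMinor (a : Matrix (Fin n) (Fin n) R) (t : ℕ) : R :=
  if h : t ≤ n then (a.submatrix (Fin.castLE h) (Fin.castLE h)).det else 1

theorem leadingMinor_zero (a : Matrix (Fin n) (Fin n) R) : a.leadingMinor 0 = 1 := by
  rw [leadingMinor, dif_pos n.zero_le, det_isEmpty]

theorem leadingMinor_succ (a : Matrix (Fin n) (Fin n) R) (k : Fin n) :
    a.leadingMinor (k + 1) = (a.submatrix (Fin.castLE k.isLt) (Fin.castLE k.isLt)).det := by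
  rw [leadingMinor, dif_pos (Nat.succ_le_of_lt k.isLt)]

theorem leadingMinor_one (t : ℕ) : (1 : Matrix (Fin n) (Fin n) R).leadingMinor t = 1 := by
  unfold leadingMinor
  split_ifs
  · rw [submatrix_one _ (Fin.castLE_injective _), det_one]
  · rfl

theorem _root_.RingHom.map_leadingMinor {S : Type*} [CommRing S] (f : R →+* S)
    (a : Matrix (Fin n) (Fin n) R) (t : ℕ) :
    f (a.leadingMinor t) = (a.map f).leadingMinor t := by
  unfold leadingMinor
  split_ifs
  · rw [f.map_det]; rfl
  · exact f.map_one

/-- Column `l` is the last column of the adjugate of the leading `(l + 1) × (l + 1)` submatrix,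
padded with zeros, so that `a * a.leadingAdjugate` is lower triangular with the leading minors
on its diagonal. -/
def leadingAdjugate (a : Matrix (Fin n) (Fin n) R) : Matrix (Fin n) (Fin n) R :=
  of fun j l => if h : j ≤ l then
    adjugate (a.submatrix (Fin.castLE l.isLt) (Fin.castLE l.isLt)) ⟨j, Nat.lt_succ_of_le h⟩
      (Fin.last l)
  else 0

theorem leadingAdjugate_blockTriangular (a : Matrix (Fin n) (Fin n) R) :
    a.leadingAdjugate.BlockTriangular id :=
  fun _ _ hlj => dif_neg (not_le.mpr hlj)

theorem leadingAdjugate_apply_self (a : Matrix (Fin n) (Fin n) R) (l : Fin n) :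
    a.leadingAdjugate l l = a.leadingMinor l := by
  rw [leadingAdjugate, of_apply, dif_pos le_rfl,
    show (⟨l, _⟩ : Fin (l + 1)) = Fin.last l from rfl, adjugate_fin_succ_eq_det_submatrix,
    Fin.succAbove_last, Fin.val_last, Even.neg_one_pow ⟨l, rfl⟩, one_mul, submatrix_submatrix,
    leadingMinor, dif_pos l.isLt.le]
  rfl

theorem mul_leadingAdjugate_of_le (a : Matrix (Fin n) (Fin n) R) {i l : Fin n} (hil : i ≤ l) :
    (a * a.leadingAdjugate) i l = if i = l then a.leadingMinor (l + 1) else 0 := by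
  set A := a.submatrix (Fin.castLE l.isLt) (Fin.castLE l.isLt)
  have hsum : (a * a.leadingAdjugate) i l =
      (A * adjugate A) ⟨i, Nat.lt_succ_of_le hil⟩ (Fin.last l) := by
    rw [mul_apply, mul_apply]
    refine (Fintype.sum_of_injective (Fin.castLE l.isLt) (Fin.castLE_injective _) _ _
      (fun j hj => ?_) fun j => ?_).symm
    · have hjl : ¬ j ≤ l := fun h => hj ⟨⟨j, Nat.lt_succ_of_le h⟩, rfl⟩
      rw [leadingAdjugate, of_apply, dif_neg hjl, mul_zero]
    · rw [leadingAdjugate, of_apply,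
        dif_pos (show Fin.castLE l.isLt j ≤ l from Nat.lt_succ_iff.mp j.isLt)]
      rfl
  rw [hsum, mul_adjugate, smul_apply, one_apply, smul_eq_mul, leadingMinor_succ]
  simp only [Fin.ext_iff, Fin.val_last]
  split_ifs <;> simp [A]

end Matrix

theorem Fin.prod_pow_succ_eq_prod_pow_sub_mul {α : Type*} [CommMonoid α] {n : ℕ}
    (f : ℕ → α) (hf : f 0 = 1) {m : Fin n → ℕ} (hm : Antitone m) :
    ∏ k : Fin n, f (k + 1) ^ m k =
      (∏ k : Fin n, f (k + 1) ^ (m k - if h : k.val + 1 < n then m ⟨k + 1, h⟩ else 0)) *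
        ∏ k : Fin n, f k ^ m k := by
  set m' : ℕ → ℕ := fun t => if h : t < n then m ⟨t, h⟩ else 0
  have hnext (k : Fin n) : (if h : k.val + 1 < n then m ⟨k + 1, h⟩ else 0) = m' (k + 1) := rfl
  have hm' (k : Fin n) : m k = m' k := by simp [m']
  have hanti (t : ℕ) : m' (t + 1) ≤ m' t := by
    by_cases h : t + 1 < n
    · simp only [m', dif_pos h, dif_pos (Nat.lt_of_succ_lt h)]
      exact hm (Fin.mk_le_mk.mpr t.le_succ)
    · simp only [m', dif_neg h]
      exact Nat.zero_le _
  simp only [hnext]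
  simp only [hm']
  rw [Fin.prod_univ_eq_prod_range (fun t => f (t + 1) ^ m' t),
    Fin.prod_univ_eq_prod_range (fun t => f (t + 1) ^ (m' t - m' (t + 1))),
    Fin.prod_univ_eq_prod_range (fun t => f t ^ m' t)]
  have hshift : ∏ t ∈ range n, f t ^ m' t = ∏ t ∈ range n, f (t + 1) ^ m' (t + 1) := by
    have h := prod_range_succ' (fun t => f t ^ m' t) n
    rw [prod_range_succ, hf, one_pow, mul_one] at h
    simpa [m'] using h
  rw [hshift, ← prod_mul_distrib]
  exact prod_congr rfl fun t _ => by rw [← pow_add, Nat.sub_add_cancel (hanti t)]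

section DetNestedBlockMatrix

variable {R : Type*} [CommRing R] {n D : ℕ} {M : Fin n → ℕ}

theorem nestedBlockMatrix_map {S : Type*} [CommRing S] (f : R →+* S) (hle : ∀ j, M j ≤ D)
    (a : Matrix (Fin n) (Fin n) R) (C : ∀ i, Matrix (Fin (M i)) (Fin D) R) :
    (nestedBlockMatrix hle a C).map f = nestedBlockMatrix hle (a.map f) fun i => (C i).map f := by
  ext p q
  simp [nestedBlockMatrix]

theorem det_nestedBlockMatrix_mul_prod_leadingMinor (hle : ∀ j, M j ≤ D) (hM : Antitone M)
    (a : Matrix (Fin n) (Fin n) R) (C : ∀ i, Matrix (Fin (M i)) (Fin D) R) :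
    (nestedBlockMatrix hle a C).det * ∏ l : Fin n, a.leadingMinor l ^ M l =
      ∏ k : Fin n,
        a.leadingMinor (k + 1) ^ M k * ((C k).submatrix id (Fin.castLE (hle k))).det := by
  set B := nestedBlockMatrix hle a C
  set U := scalarBlockMatrix M a.leadingAdjugate
  have hBU := nestedBlockMatrix_mul_scalarBlockMatrix_apply hle hM a C
    a.leadingAdjugate_blockTriangular
  have hdetU : U.det = ∏ l : Fin n, a.leadingMinor l ^ M l := by
    simp only [U, det_scalarBlockMatrix a.leadingAdjugate_blockTriangular,
      leadingAdjugate_apply_self]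
  have hlower : (B * U)ᵀ.BlockTriangular Sigma.fst := by
    rintro ⟨i, s⟩ ⟨l, t⟩ (hli : l < i)
    rw [transpose_apply, hBU, mul_leadingAdjugate_of_le a hli.le, if_neg hli.ne, zero_mul]
  have hdiag (k : Fin n) : (B * U).submatrix (Sigma.mk k) (Sigma.mk k) =
      a.leadingMinor (k + 1) • (C k).submatrix id (Fin.castLE (hle k)) := by
    ext s t
    rw [submatrix_apply, hBU, mul_leadingAdjugate_of_le a le_rfl, if_pos rfl]
    rfl
  rw [← hdetU, ← det_mul, det_sigma_of_blockTriangular_transpose hlower]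
  simp only [hdiag, det_smul, Fintype.card_fin]

theorem det_nestedBlockMatrix_of_leadingMinor_ne_zero [IsDomain R] (hle : ∀ j, M j ≤ D)
    (hM : Antitone M) (a : Matrix (Fin n) (Fin n) R) (C : ∀ i, Matrix (Fin (M i)) (Fin D) R)
    (ha : ∀ k : Fin n, a.leadingMinor k ≠ 0) :
    (nestedBlockMatrix hle a C).det =
      (∏ k : Fin n, a.leadingMinor (k + 1) ^
          (M k - if h : k.val + 1 < n then M ⟨k + 1, h⟩ else 0)) *
        ∏ k, ((C k).submatrix id (Fin.castLE (hle k))).det := by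
  refine mul_right_cancel₀ (b := ∏ l : Fin n, a.leadingMinor l ^ M l)
    (prod_ne_zero_iff.mpr fun l _ => pow_ne_zero _ (ha l)) ?_
  rw [det_nestedBlockMatrix_mul_prod_leadingMinor hle hM, prod_mul_distrib,
    Fin.prod_pow_succ_eq_prod_pow_sub_mul _ a.leadingMinor_zero hM]
  ring

theorem det_nestedBlockMatrix [IsDomain R] (hle : ∀ j, M j ≤ D) (hM : Antitone M)
    (a : Matrix (Fin n) (Fin n) R) (C : ∀ i, Matrix (Fin (M i)) (Fin D) R) :
    (nestedBlockMatrix hle a C).det =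
      (∏ k : Fin n, a.leadingMinor (k + 1) ^
          (M k - if h : k.val + 1 < n then M ⟨k + 1, h⟩ else 0)) *
        ∏ k, ((C k).submatrix id (Fin.castLE (hle k))).det := by
  let X : Matrix (Fin n) (Fin n) (MvPolynomial (Fin n × Fin n) R) :=
    of fun i j => MvPolynomial.X (i, j)
  have hX (t : ℕ) : X.leadingMinor t ≠ 0 := by
    intro h
    have hone : X.map (MvPolynomial.eval fun p => if p.1 = p.2 then 1 else 0) = 1 := by
      ext i j
      simp [X, one_apply]
    have h1 := congrArg (MvPolynomial.eval fun p => if p.1 = p.2 then (1 : R) else 0) h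
    rw [RingHom.map_leadingMinor, hone, leadingMinor_one, map_zero] at h1
    exact one_ne_zero h1
  have hgeneric := congrArg (MvPolynomial.eval fun p => a p.1 p.2)
    (det_nestedBlockMatrix_of_leadingMinor_ne_zero hle hM X (fun i => (C i).map MvPolynomial.C)
      fun k => hX k)
  have hXa : X.map (MvPolynomial.eval fun p => a p.1 p.2) = a := by
    ext i j
    simp [X]
  simpa only [map_mul, map_prod, map_pow, RingHom.map_det, RingHom.mapMatrix_apply,
    RingHom.map_leadingMinor, nestedBlockMatrix_map, hXa, submatrix_map, Matrix.map_map,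
    Function.comp_def, MvPolynomial.eval_C, Matrix.map_id'] using hgeneric

end DetNestedBlockMatrix

/-- `C i` is the paper's `B_{i1}`, so the `(i, j)` block of `B` is `a i j` times the first `M j`
columns of `C i`. -/
theorem stmt_17 (n : ℕ) (hn : 0 < n) (M : Fin n → ℕ) (hM : Antitone M)
    (hle : ∀ j : Fin n, M j ≤ M ⟨0, hn⟩)
    (a : Fin n → Fin n → ℂ)
    (C : (i : Fin n) → Matrix (Fin (M i)) (Fin (M ⟨0, hn⟩)) ℂ)
    (B : Matrix ((i : Fin n) × Fin (M i)) ((i : Fin n) × Fin (M i)) ℂ)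
    (hB : ∀ (i j : Fin n) (s : Fin (M i)) (t : Fin (M j)),
      B ⟨i, s⟩ ⟨j, t⟩ = a i j * C i s (Fin.castLE (hle j) t)) :
    B.det =
      (∏ k : Fin n,
        (Matrix.det (Matrix.of fun i j : Fin (k.val + 1) =>
            a (Fin.castLE k.isLt i) (Fin.castLE k.isLt j))) ^
          (M k - if h : k.val + 1 < n then M ⟨k.val + 1, h⟩ else 0)) *
      ∏ i : Fin n,
        Matrix.det (Matrix.of fun s t : Fin (M i) => C i s (Fin.castLE (hle i) t)) := by
  have hB' : B = nestedBlockMatrix hle (of a) C := by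
    ext ⟨i, s⟩ ⟨j, t⟩
    exact hB i j s t
  rw [hB', det_nestedBlockMatrix hle hM]
  simp only [Matrix.leadingMinor_succ]
  rfl
end
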